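/- arXiv:1708.02092 — 3 statements merged into one kernel-verified Lean document; each statement's English description precedes it below -/
import Mathlib

section
/- Let G be a simple graph with minimum degree at least 2, cellularly embedded in an orientable surface. Then every face of length 5 is simple, i.e., no vertex appears more than once in the boundary walk of a 5-sided face. -/
/-!
Along a face walk `u₀ u₁ u₂ …`, consecutive vertices differ because they are adjacent, and
`u_{i+2} = rot_{u_{i+1}}(u_i) ≠ u_i` because a cyclic rotation of at least two neighbours has
no fixed point. In a closed walk of length 5 any two positions are at cyclic distance 1 or 2,
so all five vertices are distinct.
-/

open SimpleGraph

/-- A rotation system on a simple graph `G`: at each vertex `v`, a cyclic permutation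
`rot v` of the neighbors of `v`.  By the Heffter–Edmonds principle this is exactly the
combinatorial data of a cellular embedding of `G` in an orientable surface. -/
structure RotSys {V : Type} (G : SimpleGraph V) where
  rot : V → V → V
  adj_rot : ∀ {v w : V}, G.Adj v w → G.Adj v (rot v w)
  inj : ∀ {v w w' : V}, G.Adj v w → G.Adj v w' → rot v w = rot v w' → w = w'
  cyc : ∀ {v w w' : V}, G.Adj v w → G.Adj v w' → ∃ k : ℕ, (rot v)^[k] w = w'

/-- The face-tracing map on darts: the faces of the embedding described by a rotation
system are the orbits of this map (Heffter–Edmonds). -/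
def RotSys.next {V : Type} {G : SimpleGraph V} (R : RotSys G) (d : G.Dart) : G.Dart :=
  ⟨(d.toProd.2, R.rot d.toProd.2 d.toProd.1), R.adj_rot d.adj.symm⟩

/-- The number of faces of the embedding described by a rotation system: the number of
orbits of the face-tracing map. -/
noncomputable def RotSys.numFaces {V : Type} {G : SimpleGraph V} (R : RotSys G) : ℕ :=
  Nat.card (Quot (fun d d' => R.next d = d'))

theorem Function.Periodic.injOn_Iio_of_ne_add {α : Type*} {f : ℕ → α} {n m : ℕ}
    (hper : Function.Periodic f n) (hn : n ≤ 2 * m + 1)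
    (hne : ∀ i k, 0 < k → k ≤ m → f i ≠ f (i + k)) : Set.InjOn f (Set.Iio n) := by
  -- two indices in `[0, n)` are at distance at most `m` one way or the other around the cycle
  suffices key : ∀ i j, i < j → j < n → f i ≠ f j by
    intro i hi j hj hij
    rcases lt_trichotomy i j with h | rfl | h
    · exact absurd hij (key i j h hj)
    · rfl
    · exact absurd hij.symm (key j i h hi)
  intro i j hij hj
  by_cases hk : j - i ≤ m
  · have := hne i (j - i) (by omega) hk
    rwa [Nat.add_sub_cancel' hij.le] at this
  · have hwrap : j + (n - (j - i)) = i + n := by omega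
    have := hne j (n - (j - i)) (by omega) (by omega)
    rw [hwrap, hper] at this
    exact this.symm

namespace RotSys

variable {V : Type} {G : SimpleGraph V} (R : RotSys G)

lemma rot_ne_self [Fintype V] [DecidableRel G.Adj] {a b : V} (hdeg : 2 ≤ G.degree a)
    (hab : G.Adj a b) : R.rot a b ≠ b := by
  intro hfix
  have hiter : ∀ k, (R.rot a)^[k] b = b := fun k => Function.iterate_fixed hfix k
  have hall : ∀ w ∈ G.neighborFinset a, w = b := by
    intro w hw
    obtain ⟨k, hk⟩ := R.cyc hab ((G.mem_neighborFinset a w).1 hw)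
    rw [← hk, hiter]
  have : G.degree a ≤ 1 := Finset.card_le_one.2 fun x hx y hy => (hall x hx).trans (hall y hy).symm
  omega

lemma next_iterate_snd (d : G.Dart) (i : ℕ) :
    (R.next^[i] d).snd = (R.next^[i + 1] d).fst := by
  rw [Function.iterate_succ_apply']
  rfl

lemma adj_next_iterate_fst (d : G.Dart) (i : ℕ) :
    G.Adj (R.next^[i] d).fst (R.next^[i + 1] d).fst :=
  R.next_iterate_snd d i ▸ (R.next^[i] d).adj

lemma next_iterate_add_two_fst (d : G.Dart) (i : ℕ) :
    (R.next^[i + 2] d).fst = R.rot (R.next^[i + 1] d).fst (R.next^[i] d).fst := by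
  rw [← next_iterate_snd, Function.iterate_succ_apply']
  rfl

lemma next_iterate_fst_ne_add_two [Fintype V] [DecidableRel G.Adj]
    (hdeg : ∀ v, 2 ≤ G.degree v) (d : G.Dart) (i : ℕ) :
    (R.next^[i] d).fst ≠ (R.next^[i + 2] d).fst := by
  rw [next_iterate_add_two_fst]
  exact (R.rot_ne_self (hdeg _) (R.adj_next_iterate_fst d i).symm).symm

end RotSys

theorem stmt5_general {V : Type} [Fintype V] (G : SimpleGraph V)
    [DecidableRel G.Adj] (hdeg : ∀ v, 2 ≤ G.degree v)
    (R : RotSys G) (d : G.Dart)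
    (hlen : (R.next)^[5] d = d) :
    ∀ i j, i < 5 → j < 5 →
      ((R.next)^[i] d).toProd.1 = ((R.next)^[j] d).toProd.1 → i = j := by
  intro i j hi hj hij
  have hper : Function.Periodic (fun k => (R.next^[k] d).fst) 5 := fun k => by
    simp only [Function.iterate_add_apply, hlen]
  refine hper.injOn_Iio_of_ne_add (m := 2) le_rfl (fun k l hl hl2 => ?_) hi hj hij
  interval_cases l
  · exact (R.adj_next_iterate_fst d k).ne
  · exact R.next_iterate_fst_ne_add_two hdeg d k

/-- Let `G` be a simple graph with minimum degree at least 2, cellularly embedded in an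
orientable surface (given by a rotation system).  Then every face of length 5 is
simple: the five vertices on its boundary walk are pairwise distinct. -/
theorem stmt5 {V : Type} [Fintype V] [DecidableEq V] (G : SimpleGraph V)
    [DecidableRel G.Adj] (hdeg : ∀ v, 2 ≤ G.degree v)
    (R : RotSys G) (d : G.Dart)
    (hlen : (R.next)^[5] d = d) (hmin : ∀ k, 0 < k → k < 5 → (R.next)^[k] d ≠ d) :
    ∀ i j, i < 5 → j < 5 →
      ((R.next)^[i] d).toProd.1 = ((R.next)^[j] d).toProd.1 → i = j :=
  stmt5_general G hdeg R d hlen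
end

section
/- Let G be a simple graph with minimum degree at least 2, cellularly embedded in an orientable surface. Then in any face of length 6, at most one vertex is repeated in the boundary walk, and the two occurrences of any repeated vertex are antipodal, i.e., the boundary walk has the form [a, b, x, c, d, x'] where only x and x' can be equal. -/
/-!
Write `x k = R.faceVertex d k` for the `k`-th vertex of the boundary walk of the face through
`d`. Consecutive vertices of the walk are adjacent, hence distinct; and `x (k + 2) = x k` would
mean that the rotation at `x (k + 1)` fixes `x k`, which forces `x (k + 1)` to have degree 1.
So in a face of length 6 repeated vertices sit at cyclic distance 3. A dart is determined by its
tail and the tail of its successor, so if two consecutive positions `k, k + 1` both repeat at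
distance 3, the darts at `k` and `k + 3` coincide and, the face-tracing map being injective, the
face would have length 3. Any two of the antipodal pairs `(0, 3), (1, 4), (2, 5)` are
consecutive in this sense.
-/

open SimpleGraph

namespace RotSys

variable {V : Type} {G : SimpleGraph V} (R : RotSys G)

theorem next_injective : Function.Injective R.next := by
  intro a b h
  have h₂ : a.snd = b.snd := congrArg (fun e => e.fst) h
  have hrot : R.rot a.snd a.fst = R.rot b.snd b.fst := congrArg (fun e => e.snd) h
  have h₁ : a.fst = b.fst := R.inj a.adj.symm (h₂ ▸ b.adj.symm) (by rw [hrot, h₂])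
  exact Dart.ext _ _ (Prod.ext h₁ h₂)

theorem eq_of_fst_eq_of_fst_next_eq {e e' : G.Dart} (h₀ : e.fst = e'.fst)
    (h₁ : (R.next e).fst = (R.next e').fst) : e = e' :=
  Dart.ext _ _ (Prod.ext h₀ h₁)

theorem rot_ne_self_s6 [Fintype V] [DecidableRel G.Adj] {v w : V} (hv : 2 ≤ G.degree v)
    (hadj : G.Adj v w) : R.rot v w ≠ w := by
  intro hfix
  have hsub : G.neighborFinset v ⊆ {w} := fun w' hw' => by
    obtain ⟨k, hk⟩ := R.cyc hadj ((G.mem_neighborFinset v w').1 hw')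
    rw [Function.iterate_fixed hfix k] at hk
    simp [← hk]
  have hcard := Finset.card_le_card hsub
  rw [card_neighborFinset_eq_degree, Finset.card_singleton] at hcard
  omega

def faceVertex (d : G.Dart) (k : ℕ) : V :=
  (R.next^[k] d).fst

theorem faceVertex_add_period {d : G.Dart} {n : ℕ} (hlen : R.next^[n] d = d) (k : ℕ) :
    R.faceVertex d (k + n) = R.faceVertex d k := by
  rw [faceVertex, Function.iterate_add_apply, hlen, faceVertex]

theorem faceVertex_succ_ne (d : G.Dart) (k : ℕ) :
    R.faceVertex d (k + 1) ≠ R.faceVertex d k := by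
  rw [faceVertex, Function.iterate_succ_apply']
  exact (R.next^[k] d).snd_ne_fst

theorem faceVertex_add_two_ne [Fintype V] [DecidableRel G.Adj] (hdeg : ∀ v, 2 ≤ G.degree v)
    (d : G.Dart) (k : ℕ) : R.faceVertex d (k + 2) ≠ R.faceVertex d k := by
  rw [faceVertex, Function.iterate_succ_apply', Function.iterate_succ_apply']
  exact R.rot_ne_self_s6 (hdeg _) (R.next^[k] d).adj.symm

theorem three_le_of_faceVertex_eq [Fintype V] [DecidableRel G.Adj]
    (hdeg : ∀ v, 2 ≤ G.degree v) {d : G.Dart} {k m : ℕ} (hm : 0 < m)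
    (h : R.faceVertex d k = R.faceVertex d (k + m)) : 3 ≤ m := by
  by_contra! hm3
  obtain rfl | rfl : m = 1 ∨ m = 2 := by omega
  · exact R.faceVertex_succ_ne d k h.symm
  · exact R.faceVertex_add_two_ne hdeg d k h.symm

theorem three_le_sub_of_faceVertex_eq [Fintype V] [DecidableRel G.Adj]
    (hdeg : ∀ v, 2 ≤ G.degree v) {d : G.Dart} {n k m : ℕ} (hlen : R.next^[n] d = d)
    (hmn : m < n) (h : R.faceVertex d k = R.faceVertex d (k + m)) : 3 ≤ n - m := by
  refine R.three_le_of_faceVertex_eq hdeg (d := d) (k := k + m) (by omega) ?_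
  rw [show k + m + (n - m) = k + n by omega, R.faceVertex_add_period hlen, h]

theorem iterate_eq_self_of_faceVertex_eq {d : G.Dart} {k m : ℕ}
    (h₀ : R.faceVertex d k = R.faceVertex d (k + m))
    (h₁ : R.faceVertex d (k + 1) = R.faceVertex d (k + m + 1)) : R.next^[m] d = d := by
  have hdart : R.next^[k] d = R.next^[k] (R.next^[m] d) := by
    rw [← Function.iterate_add_apply]
    refine R.eq_of_fst_eq_of_fst_next_eq h₀ ?_
    simpa only [faceVertex, Function.iterate_succ_apply'] using h₁
  exact ((R.next_injective.iterate k) hdart).symm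

end RotSys

theorem stmt6_general {V : Type} [Fintype V] (G : SimpleGraph V)
    [DecidableRel G.Adj] (hdeg : ∀ v, 2 ≤ G.degree v)
    (R : RotSys G) (d : G.Dart)
    (hlen : (R.next)^[6] d = d) (hmin : ∀ k, 0 < k → k < 6 → (R.next)^[k] d ≠ d) :
    (∀ i j, i < j → j < 6 →
        ((R.next)^[i] d).toProd.1 = ((R.next)^[j] d).toProd.1 → j = i + 3) ∧
    (∀ i i', i < 3 → i' < 3 →
        ((R.next)^[i] d).toProd.1 = ((R.next)^[i + 3] d).toProd.1 →
        ((R.next)^[i'] d).toProd.1 = ((R.next)^[i' + 3] d).toProd.1 → i = i') := by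
  have hface3 : R.next^[3] d ≠ d := hmin 3 (by norm_num) (by norm_num)
  refine ⟨fun i j hij hj h => ?_, fun i i' hi hi' h h' => ?_⟩
  · obtain ⟨m, rfl⟩ : ∃ m, j = i + m := ⟨j - i, by omega⟩
    have h₁ := R.three_le_of_faceVertex_eq hdeg (by omega) h
    have h₂ := R.three_le_sub_of_faceVertex_eq hdeg hlen (by omega) h
    omega
  · by_contra hne
    wlog hlt : i < i' generalizing i i'
    · exact this i' i hi' hi h' h (Ne.symm hne) (by omega)
    obtain rfl | ⟨rfl, rfl⟩ : i' = i + 1 ∨ (i = 0 ∧ i' = 2) := by omega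
    · exact hface3 (R.iterate_eq_self_of_faceVertex_eq h h')
    · refine hface3 (R.iterate_eq_self_of_faceVertex_eq (k := 2) h' ?_)
      exact h.symm.trans (R.faceVertex_add_period hlen 0).symm

/-- Let `G` be a simple graph with minimum degree at least 2, cellularly embedded in an
orientable surface (given by a rotation system).  Then in any face of length 6, the two
occurrences of a repeated vertex are antipodal (at distance 3 along the boundary walk),
and at most one vertex of the face is repeated. -/
theorem stmt6 {V : Type} [Fintype V] [DecidableEq V] (G : SimpleGraph V)
    [DecidableRel G.Adj] (hdeg : ∀ v, 2 ≤ G.degree v)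
    (R : RotSys G) (d : G.Dart)
    (hlen : (R.next)^[6] d = d) (hmin : ∀ k, 0 < k → k < 6 → (R.next)^[k] d ≠ d) :
    (∀ i j, i < j → j < 6 →
        ((R.next)^[i] d).toProd.1 = ((R.next)^[j] d).toProd.1 → j = i + 3) ∧
    (∀ i i', i < 3 → i' < 3 →
        ((R.next)^[i] d).toProd.1 = ((R.next)^[i + 3] d).toProd.1 →
        ((R.next)^[i'] d).toProd.1 = ((R.next)^[i' + 3] d).toProd.1 → i = i') :=
  stmt6_general G hdeg R d hlen hmin
end

section
/- K_8 has no nearly triangular embedding in the orientable surface of genus 2: there is no cellular embedding of K_8 in S_2 with at most one nontriangular face. Consequently, assuming Huneke's theorem that no simple graph with fewer than 10 vertices triangulates S_2, K_8 has no nearly triangular minimum genus embedding. -/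
open SimpleGraph

/-- An embedding (rotation system) is nearly triangular if at most one face is
nontriangular: every face either is a triangle or is the face of some fixed dart. -/
def RotSys.nearlyTriangular {V : Type} {G : SimpleGraph V} (R : RotSys G) : Prop :=
  ∃ d₀ : G.Dart, ∀ d : G.Dart, (R.next)^[3] d = d ∨ ∃ k : ℕ, (R.next)^[k] d₀ = d

/-!
By Euler's formula an embedding of `K_8` in `S_2` has 18 faces. Since every dart lies on
exactly one face, if all faces but one are triangles, then `56 = 3 · 17 + 5`: the exceptional
face is a pentagon. A rotation of `K_8` at a vertex has no fixed point, so the boundary walk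
`w₀ … w₄` of the pentagon never returns to a vertex after one or two steps, hence is a simple
5-cycle. Placing a new vertex inside it, joined to `w₀, …, w₄`, turns the pentagon into five
triangles: the result triangulates `S_2` with 9 vertices, 33 edges and 22 faces, contradicting
Huneke's theorem.
-/

open Function

namespace Function

variable {α : Type*} {f : α → α}

theorem Injective.exists_iterate_eq_of_iterate_eq [Finite α] (hf : Injective f) {x y : α}
    {k : ℕ} (h : f^[k] x = y) : ∃ m, f^[m] y = x := by
  have hper : IsPeriodicPt f (minimalPeriod f x * k) x :=
    (isPeriodicPt_minimalPeriod f x).mul_const k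
  have hk : k ≤ minimalPeriod f x * k :=
    Nat.le_mul_of_pos_left k (minimalPeriod_pos_of_mem_periodicPts (hf.mem_periodicPts x))
  refine ⟨minimalPeriod f x * k - k, ?_⟩
  rw [← h, ← iterate_add_apply, Nat.sub_add_cancel hk]
  exact hper.eq

theorem Injective.quot_mk_eq_iff [Finite α] (hf : Injective f) {x y : α} :
    Quot.mk (fun a b => f a = b) x = Quot.mk _ y ↔ ∃ k, f^[k] x = y := by
  constructor
  · intro h
    obtain hgen := Quot.eqvGen_exact h
    clear h
    induction hgen with
    | rel a b hab => exact ⟨1, hab⟩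
    | refl a => exact ⟨0, rfl⟩
    | symm a b _ ih => exact hf.exists_iterate_eq_of_iterate_eq ih.choose_spec
    | trans a b c _ _ ihab ihbc =>
      obtain ⟨k, rfl⟩ := ihab
      obtain ⟨l, rfl⟩ := ihbc
      exact ⟨l + k, iterate_add_apply f l k a⟩
  · rintro ⟨k, rfl⟩
    induction k with
    | zero => rfl
    | succ k ih => exact ih.trans (Quot.sound (iterate_succ_apply' f k x).symm)

theorem natCard_orbit_eq_minimalPeriod {x : α} (hx : x ∈ periodicPts f) :
    Nat.card {y // ∃ k, f^[k] x = y} = minimalPeriod f x := by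
  have hpos := minimalPeriod_pos_of_mem_periodicPts hx
  rw [← Nat.card_fin (minimalPeriod f x)]
  refine (Nat.card_eq_of_bijective (fun k => ⟨f^[k] x, k, rfl⟩) ⟨?_, ?_⟩).symm
  · intro k l hkl
    exact Fin.ext (iterate_injOn_Iio_minimalPeriod k.2 l.2 (congrArg Subtype.val hkl))
  · rintro ⟨y, k, rfl⟩
    exact ⟨⟨k % minimalPeriod f x, Nat.mod_lt k hpos⟩,
      Subtype.ext iterate_mod_minimalPeriod_eq⟩

theorem Injective.natCard_quot_fiber_eq_minimalPeriod [Finite α] (hf : Injective f) (x : α) :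
    Nat.card {y // Quot.mk (fun a b => f a = b) y = Quot.mk _ x} = minimalPeriod f x := by
  rw [← natCard_orbit_eq_minimalPeriod (hf.mem_periodicPts x)]
  exact Nat.card_congr (Equiv.subtypeEquivRight fun y => eq_comm.trans hf.quot_mk_eq_iff)

theorem Injective.natCard_add_three_eq [Finite α] (hf : Injective f) (x₀ : α)
    (h : ∀ x, minimalPeriod f x = 3 ∨ ∃ k, f^[k] x₀ = x) :
    Nat.card α + 3 = 3 * Nat.card (Quot fun x y : α => f x = y) + minimalPeriod f x₀ := by
  classical
  have := Fintype.ofFinite (Quot fun x y : α => f x = y)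
  set q : α → Quot (fun x y : α => f x = y) := Quot.mk _
  have hsum : Nat.card α = ∑ c, Nat.card {y // q y = c} := by
    rw [← Nat.card_sigma]
    exact Nat.card_congr (Equiv.sigmaFiberEquiv q).symm
  have hothers : ∀ c ∈ Finset.univ.erase (q x₀), Nat.card {y // q y = c} = 3 := by
    rintro ⟨x⟩ hx
    rw [hf.natCard_quot_fiber_eq_minimalPeriod x]
    refine (h x).resolve_right fun hreach => ?_
    exact Finset.ne_of_mem_erase hx (hf.quot_mk_eq_iff.mpr hreach).symm
  have hpos : 0 < Nat.card (Quot fun x y : α => f x = y) :=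
    Nat.card_pos_iff.mpr ⟨⟨q x₀⟩, inferInstance⟩
  rw [hsum, ← Finset.add_sum_erase _ _ (Finset.mem_univ (q x₀)), Finset.sum_congr rfl hothers,
    hf.natCard_quot_fiber_eq_minimalPeriod x₀, Finset.sum_const,
    Finset.card_erase_of_mem (Finset.mem_univ _), Finset.card_univ, ← Nat.card_eq_fintype_card,
    smul_eq_mul]
  omega

theorem Injective.natCard_eq_three_mul [Finite α] (hf : Injective f)
    (h : ∀ x, minimalPeriod f x = 3) :
    Nat.card α = 3 * Nat.card (Quot fun x y : α => f x = y) := by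
  rcases isEmpty_or_nonempty α with hα | ⟨⟨x₀⟩⟩
  · simp
  · have := hf.natCard_add_three_eq x₀ (fun x => .inl (h x))
    rw [h x₀] at this
    omega

theorem IsPeriodicPt.iterate_val_add_one {x : α} {n : ℕ} [NeZero n] (h : IsPeriodicPt f n x)
    (i : ZMod n) :
    f^[(i + 1).val] x = f (f^[i.val] x) := by
  rw [← iterate_succ_apply' f, ← h.iterate_mod_apply (i.val + 1), ZMod.val_add,
    ZMod.val_one_eq_one_mod, Nat.add_mod_mod]

end Function

theorem ZMod.injective_of_ne_add_one_of_ne_add_two {β : Type*} {w : ZMod 5 → β}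
    (h₁ : ∀ i, w i ≠ w (i + 1)) (h₂ : ∀ i, w i ≠ w (i + 2)) : Injective w := by
  intro i j hij
  have hcases : ∀ k : ZMod 5, k = 0 ∨ k = 1 ∨ k = 2 ∨ k = -2 ∨ k = -1 := by decide
  obtain ⟨k, rfl⟩ : ∃ k, j = i + k := ⟨j - i, (add_sub_cancel i j).symm⟩
  rcases hcases k with rfl | rfl | rfl | rfl | rfl
  · exact (add_zero i).symm
  · exact absurd hij (h₁ i)
  · exact absurd hij (h₂ i)
  · exact absurd hij.symm (by simpa using h₂ (i + -2))
  · exact absurd hij.symm (by simpa using h₁ (i + -1))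

namespace Option

variable {β : Type*} (f : β → β) (p : β)

open Classical in
noncomputable def insertNoneAfter : Option β → Option β
  | none => some (f p)
  | some y => if y = p then none else some (f y)

variable {f p}

@[simp]
theorem insertNoneAfter_none : insertNoneAfter f p none = some (f p) := rfl

@[simp]
theorem insertNoneAfter_self : insertNoneAfter f p (some p) = none := if_pos rfl

theorem insertNoneAfter_of_ne {y : β} (hy : y ≠ p) : insertNoneAfter f p (some y) = some (f y) :=
  if_neg hy

variable {s : Set β}

theorem insertNoneAfter_mapsTo (hp : p ∈ s) (hf : Set.MapsTo f s s) :
    Set.MapsTo (insertNoneAfter f p) {u | ∀ y ∈ u, y ∈ s} {u | ∀ y ∈ u, y ∈ s} := by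
  rintro (_ | y) hy
  · simpa using hf hp
  · by_cases hyp : y = p
    · simp [hyp]
    · simpa [insertNoneAfter_of_ne hyp] using hf (hy y rfl)

theorem insertNoneAfter_injOn (hp : p ∈ s) (hf : Set.InjOn f s) :
    Set.InjOn (insertNoneAfter f p) {u | ∀ y ∈ u, y ∈ s} := by
  have key : ∀ {y}, y ∈ s → y ≠ p →
      insertNoneAfter f p (some y) ≠ insertNoneAfter f p none :=
    fun hy hyp h => hyp (hf hy hp (by simpa [insertNoneAfter_of_ne hyp] using h))
  rintro (_ | y) hy (_ | y') hy' h
  · rfl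
  · by_cases hyp' : y' = p
    · simp [hyp'] at h
    · exact absurd h.symm (key (hy' y' rfl) hyp')
  · by_cases hyp : y = p
    · simp [hyp] at h
    · exact absurd h (key (hy y rfl) hyp)
  · by_cases hyp : y = p <;> by_cases hyp' : y' = p
    · rw [hyp, hyp']
    · simp [hyp, insertNoneAfter_of_ne hyp'] at h
    · simp [hyp', insertNoneAfter_of_ne hyp] at h
    · rw [insertNoneAfter_of_ne hyp, insertNoneAfter_of_ne hyp'] at h
      exact congrArg some (hf (hy y rfl) (hy' y' rfl) (Option.some.inj h))

theorem iterate_insertNoneAfter_some {x : β} {k : ℕ} (h : ∀ j < k, f^[j] x ≠ p) :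
    (insertNoneAfter f p)^[k] (some x) = some (f^[k] x) := by
  induction k with
  | zero => rfl
  | succ k ih =>
    rw [iterate_succ_apply', ih fun j hj => h j (by omega), iterate_succ_apply',
      insertNoneAfter_of_ne (h k (by omega))]

theorem exists_iterate_insertNoneAfter_eq_none (hp : p ∈ s)
    (hcyc : ∀ x ∈ s, ∀ y ∈ s, ∃ k, f^[k] x = y) {u : Option β}
    (hu : ∀ y ∈ u, y ∈ s) :
    ∃ k, (insertNoneAfter f p)^[k] u = none := by
  classical
  rcases u with _ | x
  · exact ⟨0, rfl⟩
  have hreach := hcyc x (hu x rfl) p hp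
  obtain ⟨k, hk, hmin⟩ : ∃ k, f^[k] x = p ∧ ∀ j < k, f^[j] x ≠ p :=
    ⟨Nat.find hreach, Nat.find_spec hreach, fun j => Nat.find_min hreach⟩
  refine ⟨k + 1, ?_⟩
  rw [iterate_succ_apply', iterate_insertNoneAfter_some hmin, hk, insertNoneAfter_self]

theorem exists_iterate_insertNoneAfter_none_eq (hp : p ∈ s) (hf : Set.MapsTo f s s)
    (hcyc : ∀ x ∈ s, ∀ y ∈ s, ∃ k, f^[k] x = y) {v : Option β}
    (hv : ∀ y ∈ v, y ∈ s) :
    ∃ k, (insertNoneAfter f p)^[k] none = v := by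
  classical
  rcases v with _ | y
  · exact ⟨0, rfl⟩
  have hreach := hcyc (f p) (hf hp) y (hv y rfl)
  obtain ⟨m, hm, hmin⟩ : ∃ m, f^[m] (f p) = y ∧ ∀ j < m, f^[j] (f p) ≠ y :=
    ⟨Nat.find hreach, Nat.find_spec hreach, fun j => Nat.find_min hreach⟩
  -- a return to `p` before reaching `y` would close the cycle of `f p` early
  have hmiss : ∀ j < m, f^[j] (f p) ≠ p := by
    intro j hj hjp
    have hper : f^[j + 1] (f p) = f p := by rw [iterate_succ_apply', hjp]
    refine hmin (m - (j + 1)) (by omega) ?_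
    rw [← hper, ← iterate_add_apply, Nat.sub_add_cancel (by omega), hm]
  refine ⟨m + 1, ?_⟩
  rw [iterate_succ_apply, insertNoneAfter_none, iterate_insertNoneAfter_some hmiss, hm]

theorem exists_iterate_insertNoneAfter_eq (hp : p ∈ s) (hf : Set.MapsTo f s s)
    (hcyc : ∀ x ∈ s, ∀ y ∈ s, ∃ k, f^[k] x = y) {u v : Option β}
    (hu : ∀ y ∈ u, y ∈ s) (hv : ∀ y ∈ v, y ∈ s) :
    ∃ k, (insertNoneAfter f p)^[k] u = v := by
  obtain ⟨k, hk⟩ := exists_iterate_insertNoneAfter_eq_none hp hcyc hu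
  obtain ⟨m, hm⟩ := exists_iterate_insertNoneAfter_none_eq hp hf hcyc hv
  exact ⟨m + k, by rw [iterate_add_apply, hk, hm]⟩

end Option

namespace SimpleGraph

variable {V W : Type} {G : SimpleGraph V} {H : SimpleGraph W}

instance [Finite V] : Finite G.Dart := Finite.of_injective _ Dart.toProd_injective

theorem natCard_dart_eq_two_mul [Finite V] : Nat.card G.Dart = 2 * Nat.card G.edgeSet := by
  classical
  have := Fintype.ofFinite V
  rw [Nat.card_eq_fintype_card, dart_card_eq_twice_card_edges, edgeFinset_card,
    Nat.card_eq_fintype_card]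

def Iso.dartEquiv (f : G ≃g H) : G.Dart ≃ H.Dart where
  toFun d := ⟨(f d.fst, f d.snd), f.map_adj_iff.mpr d.adj⟩
  invFun d := ⟨(f.symm d.fst, f.symm d.snd), f.symm.map_adj_iff.mpr d.adj⟩
  left_inv d := by ext <;> simp
  right_inv d := by ext <;> simp

theorem natCard_edgeSet_completeGraph [Fintype V] :
    Nat.card (completeGraph V).edgeSet = (Fintype.card V).choose 2 := by
  classical
  rw [completeGraph_eq_top, Nat.card_eq_fintype_card, ← edgeFinset_card,
    card_edgeFinset_top_eq_card_choose_two]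

end SimpleGraph

namespace RotSys

variable {V W : Type} {G : SimpleGraph V} {H : SimpleGraph W} (R : RotSys G)

theorem next_injective_s9 : Injective R.next := by
  intro d d' h
  have hsnd : d.snd = d'.snd := congrArg (fun e => e.fst) h
  have hrot : R.rot d.snd d.fst = R.rot d.snd d'.fst := by
    have : R.rot d.snd d.fst = R.rot d'.snd d'.fst := congrArg (fun e => e.snd) h
    rwa [← hsnd] at this
  have hfst := R.inj d.adj.symm (hsnd ▸ d'.adj.symm) hrot
  exact SimpleGraph.Dart.ext _ _ (Prod.ext hfst hsnd)

theorem next_ne_self (d : G.Dart) : R.next d ≠ d :=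
  fun h => d.adj.ne (congrArg (fun e => e.fst) h).symm

theorem minimalPeriod_next_eq_three {d : G.Dart} (h : R.next^[3] d = d) :
    minimalPeriod R.next d = 3 :=
  minimalPeriod_eq_prime h (R.next_ne_self d)

theorem rot_ne_self_s9 {v x u : V} (hx : G.Adj v x) (hu : G.Adj v u) (hne : u ≠ x) :
    R.rot v x ≠ x := by
  intro hfix
  obtain ⟨k, hk⟩ := R.cyc hx hu
  rw [iterate_fixed hfix] at hk
  exact hne hk.symm

theorem rot_ne_self_of_completeGraph [Fintype V] (hV : 2 < Fintype.card V)
    (R : RotSys (completeGraph V)) {v x : V} (h : v ≠ x) : R.rot v x ≠ x := by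
  classical
  obtain ⟨u, hu⟩ : ((Finset.univ.erase v).erase x).Nonempty := by
    rw [← Finset.card_pos]
    have := Finset.pred_card_le_card_erase (s := Finset.univ.erase v) (a := x)
    have := Finset.pred_card_le_card_erase (s := (Finset.univ : Finset V)) (a := v)
    rw [Finset.card_univ] at this
    omega
  simp only [Finset.mem_erase, Finset.mem_univ, and_true] at hu
  exact R.rot_ne_self_s9 h (Ne.symm hu.2) hu.1

theorem natCard_dart_add_three_eq [Finite V] (d₀ : G.Dart)
    (h : ∀ d, R.next^[3] d = d ∨ ∃ k, R.next^[k] d₀ = d) :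
    Nat.card G.Dart + 3 = 3 * R.numFaces + minimalPeriod R.next d₀ :=
  R.next_injective_s9.natCard_add_three_eq d₀ fun d => (h d).imp_left R.minimalPeriod_next_eq_three

theorem natCard_dart_eq_three_mul_numFaces [Finite V] (h : ∀ d, R.next^[3] d = d) :
    Nat.card G.Dart = 3 * R.numFaces :=
  R.next_injective_s9.natCard_eq_three_mul fun d => R.minimalPeriod_next_eq_three (h d)

def map (f : G ≃g H) : RotSys H where
  rot v x := f (R.rot (f.symm v) (f.symm x))
  adj_rot h := by
    simpa using f.map_adj_iff.mpr (R.adj_rot (f.symm.map_adj_iff.mpr h))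
  inj hx hx' heq :=
    f.symm.injective (R.inj (f.symm.map_adj_iff.mpr hx) (f.symm.map_adj_iff.mpr hx')
      (f.injective heq))
  cyc {v x y} hx hy := by
    obtain ⟨k, hk⟩ := R.cyc (f.symm.map_adj_iff.mpr hx) (f.symm.map_adj_iff.mpr hy)
    have hconj : Semiconj f.symm (fun x => f (R.rot (f.symm v) (f.symm x)))
        (R.rot (f.symm v)) := fun x => f.symm_apply_apply _
    exact ⟨k, f.symm.injective ((hconj.iterate_right k x).trans hk)⟩

theorem map_next (f : G ≃g H) (d : G.Dart) :
    (R.map f).next (f.dartEquiv d) = f.dartEquiv (R.next d) := by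
  ext <;> simp [map, next, SimpleGraph.Iso.dartEquiv]

theorem iterate_next_map (f : G ≃g H) (k : ℕ) (d : G.Dart) :
    (R.map f).next^[k] (f.dartEquiv d) = f.dartEquiv (R.next^[k] d) :=
  ((Semiconj.iterate_right (fun d => (R.map_next f d).symm) k) d).symm

theorem numFaces_map (f : G ≃g H) : (R.map f).numFaces = R.numFaces :=
  Nat.card_congr (Quot.congr f.dartEquiv fun d d' => by
    rw [R.map_next, f.dartEquiv.apply_eq_iff_eq]).symm

theorem iterate_next_map_of_forall (f : G ≃g H) {k : ℕ} (h : ∀ d, R.next^[k] d = d)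
    (d : H.Dart) :
    (R.map f).next^[k] d = d := by
  obtain ⟨d, rfl⟩ := f.dartEquiv.surjective d
  rw [R.iterate_next_map, h]

end RotSys

namespace RotSys

variable {V : Type} {G : SimpleGraph V} {R : RotSys G} {n : ℕ}

/-- A face of `R` whose darts are `(vertex i, vertex (i + 1))` for `i : ZMod n`, with no
repeated vertex. -/
structure SimpleFace (R : RotSys G) (n : ℕ) where
  vertex : ZMod n → V
  injective : Injective vertex
  adj : ∀ i, G.Adj (vertex i) (vertex (i + 1))
  rot_eq : ∀ i, R.rot (vertex (i + 1)) (vertex i) = vertex (i + 2)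

namespace SimpleFace

variable (F : R.SimpleFace n)

def dart (i : ZMod n) : G.Dart := ⟨(F.vertex i, F.vertex (i + 1)), F.adj i⟩

theorem next_dart (i : ZMod n) : R.next (F.dart i) = F.dart (i + 1) := by
  ext
  · rfl
  · exact (F.rot_eq i).trans (congrArg F.vertex (by rw [add_assoc, one_add_one_eq_two]))

theorem iterate_next_dart (k : ℕ) (i : ZMod n) : R.next^[k] (F.dart i) = F.dart (i + k) := by
  induction k with
  | zero => simp
  | succ k ih => rw [iterate_succ_apply', ih, next_dart, Nat.cast_succ, add_assoc]

theorem next_ne_dart {e : G.Dart} (he : ∀ i, e ≠ F.dart i) (i : ZMod n) :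
    R.next e ≠ F.dart i := by
  intro h
  apply he (i - 1)
  apply R.next_injective_s9
  rw [h, next_dart, sub_add_cancel]

end SimpleFace

theorem exists_simpleFace_five (hrot : ∀ {v x}, G.Adj v x → R.rot v x ≠ x) {d₀ : G.Dart}
    (h : IsPeriodicPt R.next 5 d₀) : ∃ F : R.SimpleFace 5, F.dart 0 = d₀ := by
  set d : ZMod 5 → G.Dart := fun i => R.next^[i.val] d₀
  have hd : ∀ i, d (i + 1) = R.next (d i) := h.iterate_val_add_one
  have adj : ∀ i, G.Adj (d i).fst (d (i + 1)).fst := fun i => by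
    rw [hd]; exact (d i).adj
  have rot_eq : ∀ i, R.rot (d (i + 1)).fst (d i).fst = (d (i + 2)).fst := fun i => by
    rw [← one_add_one_eq_two, ← add_assoc, hd (i + 1), hd i]; rfl
  have injective : Injective fun i => (d i).fst := by
    refine ZMod.injective_of_ne_add_one_of_ne_add_two (fun i => (adj i).ne) fun i hi => ?_
    exact hrot (adj i).symm ((rot_eq i).trans hi.symm)
  refine ⟨⟨fun i => (d i).fst, injective, adj, rot_eq⟩, ?_⟩
  ext
  · rfl
  · show (d (0 + 1)).fst = d₀.snd
    rw [hd]; rfl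

namespace SimpleFace

variable (F : R.SimpleFace n)

theorem adj_vertex_sub_one (i : ZMod n) : G.Adj (F.vertex i) (F.vertex (i - 1)) := by
  simpa using (F.adj (i - 1)).symm

theorem rot_vertex_sub_one (i : ZMod n) :
    R.rot (F.vertex i) (F.vertex (i - 1)) = F.vertex (i + 1) := by
  have h21 : (2 : ZMod n) - 1 = 1 := by ring
  simpa [sub_add_eq_add_sub, add_sub_assoc, h21] using F.rot_eq (i - 1)

def cone : SimpleGraph (Option V) where
  Adj u v := match u, v with
    | some a, some b => G.Adj a b
    | some a, none | none, some a => a ∈ Set.range F.vertex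
    | none, none => False
  symm := ⟨by rintro (_ | a) (_ | b) h <;> first | exact h | exact h.symm⟩
  loopless := ⟨by rintro (_ | a) h; exacts [h, G.loopless.irrefl a h]⟩

@[simp]
theorem cone_adj_some_some {a b : V} : F.cone.Adj (some a) (some b) ↔ G.Adj a b := Iff.rfl

@[simp]
theorem cone_adj_some_none {a : V} : F.cone.Adj (some a) none ↔ a ∈ Set.range F.vertex :=
  Iff.rfl

@[simp]
theorem cone_adj_none_some {a : V} : F.cone.Adj none (some a) ↔ a ∈ Set.range F.vertex :=
  Iff.rfl

theorem cone_adj_vertex_iff {i : ZMod n} {u : Option V} :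
    F.cone.Adj (some (F.vertex i)) u ↔ ∀ y ∈ u, G.Adj (F.vertex i) y := by
  cases u <;> simp

open Classical in
/-- The new vertex is `none`. At a boundary vertex `vertex i` it is inserted into the rotation
right after `vertex (i - 1)`, i.e. inside the face. -/
noncomputable def coneRot : Option V → Option V → Option V
  | none => Option.map fun x => F.vertex (invFun F.vertex x - 1)
  | some a =>
    if a ∈ Set.range F.vertex then
      Option.insertNoneAfter (R.rot a) (F.vertex (invFun F.vertex a - 1))
    else Option.map (R.rot a)

theorem coneRot_none_vertex (i : ZMod n) :
    F.coneRot none (some (F.vertex i)) = some (F.vertex (i - 1)) := by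
  simp [coneRot, leftInverse_invFun F.injective i]

theorem coneRot_vertex (i : ZMod n) :
    F.coneRot (some (F.vertex i)) =
      Option.insertNoneAfter (R.rot (F.vertex i)) (F.vertex (i - 1)) := by
  simp [coneRot, leftInverse_invFun F.injective i]

theorem coneRot_of_notMem {a : V} (ha : a ∉ Set.range F.vertex) :
    F.coneRot (some a) = Option.map (R.rot a) := by
  simp [coneRot, ha]

theorem coneRot_adj : ∀ {u v : Option V}, F.cone.Adj u v → F.cone.Adj u (F.coneRot u v)
  | none, some _, _ => by simp [coneRot]
  | some a, v, h => by
    by_cases ha : a ∈ Set.range F.vertex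
    · obtain ⟨i, rfl⟩ := ha
      rw [coneRot_vertex, cone_adj_vertex_iff] at *
      exact Option.insertNoneAfter_mapsTo (F.adj_vertex_sub_one i) (fun _ => R.adj_rot) h
    · cases v with
      | none => exact absurd h ha
      | some x => simpa [F.coneRot_of_notMem ha] using R.adj_rot h

theorem coneRot_inj : ∀ {u v v' : Option V}, F.cone.Adj u v → F.cone.Adj u v' →
    F.coneRot u v = F.coneRot u v' → v = v'
  | none, some _, some _, ⟨i, hi⟩, ⟨j, hj⟩, h => by
    subst hi hj
    simpa [coneRot_none_vertex, F.injective.eq_iff] using h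
  | some a, v, v', h, h', heq => by
    by_cases ha : a ∈ Set.range F.vertex
    · obtain ⟨i, rfl⟩ := ha
      rw [coneRot_vertex] at heq
      rw [cone_adj_vertex_iff] at h h'
      exact Option.insertNoneAfter_injOn (F.adj_vertex_sub_one i) (fun _ hx _ hy => R.inj hx hy)
        h h' heq
    · cases v with
      | none => exact absurd h ha
      | some x =>
        cases v' with
        | none => exact absurd h' ha
        | some x' =>
          rw [F.coneRot_of_notMem ha] at heq
          exact congrArg some (R.inj h h' (Option.some.inj heq))

theorem iterate_coneRot_none (k : ℕ) (i : ZMod n) :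
    (F.coneRot none)^[k] (some (F.vertex i)) = some (F.vertex (i - k)) := by
  induction k generalizing i with
  | zero => simp
  | succ k ih => rw [iterate_succ_apply, coneRot_none_vertex, ih, Nat.cast_succ, sub_sub,
      add_comm (1 : ZMod n)]

theorem coneRot_cyc [NeZero n] : ∀ {u v w : Option V}, F.cone.Adj u v → F.cone.Adj u w →
    ∃ k, (F.coneRot u)^[k] v = w
  | none, some _, some _, ⟨i, hi⟩, ⟨j, hj⟩ => by
    subst hi hj
    exact ⟨(i - j).val, by rw [iterate_coneRot_none, ZMod.natCast_zmod_val, sub_sub_cancel]⟩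
  | some a, v, w, hv, hw => by
    by_cases ha : a ∈ Set.range F.vertex
    · obtain ⟨i, rfl⟩ := ha
      rw [coneRot_vertex]
      rw [cone_adj_vertex_iff] at hv hw
      exact Option.exists_iterate_insertNoneAfter_eq (F.adj_vertex_sub_one i)
        (fun _ => R.adj_rot) (fun _ hx _ hy => R.cyc hx hy) hv hw
    · cases v with
      | none => exact absurd hv ha
      | some x =>
        cases w with
        | none => exact absurd hw ha
        | some y =>
          obtain ⟨k, hk⟩ := R.cyc hv hw
          have hsome : Semiconj some (R.rot a) (Option.map (R.rot a)) := fun _ => rfl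
          refine ⟨k, ?_⟩
          rw [F.coneRot_of_notMem ha, ← hsome.iterate_right k x, hk]

noncomputable def coneRotSys [NeZero n] : RotSys F.cone :=
  ⟨F.coneRot, F.coneRot_adj, F.coneRot_inj, F.coneRot_cyc⟩

def liftDart (e : G.Dart) : F.cone.Dart := ⟨(some e.fst, some e.snd), e.adj⟩

def spokeIn (i : ZMod n) : F.cone.Dart := ⟨(some (F.vertex i), none), ⟨i, rfl⟩⟩

def spokeOut (i : ZMod n) : F.cone.Dart := ⟨(none, some (F.vertex i)), ⟨i, rfl⟩⟩

theorem cone_dart_cases (d : F.cone.Dart) :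
    (∃ e, d = F.liftDart e) ∨ (∃ i, d = F.spokeIn i) ∨ ∃ i, d = F.spokeOut i := by
  obtain ⟨⟨_ | a, _ | b⟩, h⟩ := d
  · exact h.elim
  · obtain ⟨i, rfl⟩ := h
    exact .inr (.inr ⟨i, rfl⟩)
  · obtain ⟨i, rfl⟩ := h
    exact .inr (.inl ⟨i, rfl⟩)
  · exact .inl ⟨⟨(a, b), h⟩, rfl⟩

theorem natCard_cone_dart [NeZero n] [Finite V] :
    Nat.card F.cone.Dart = Nat.card G.Dart + 2 * n := by
  have hbij : Bijective (Sum.elim F.liftDart (Sum.elim F.spokeIn F.spokeOut)) := by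
    refine ⟨?_, fun d => ?_⟩
    · rintro (e | i | i) (e' | j | j) h <;>
        simp_all [liftDart, spokeIn, spokeOut, SimpleGraph.Dart.ext_iff, F.injective.eq_iff]
      exact Prod.ext h.1 h.2
    · rcases F.cone_dart_cases d with ⟨e, rfl⟩ | ⟨i, rfl⟩ | ⟨i, rfl⟩
      exacts [⟨.inl e, rfl⟩, ⟨.inr (.inl i), rfl⟩, ⟨.inr (.inr i), rfl⟩]
  rw [← Nat.card_congr (Equiv.ofBijective _ hbij), Nat.card_sum, Nat.card_sum, Nat.card_zmod]
  ring

variable [NeZero n]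

theorem next_liftDart_of_ne {e : G.Dart} (he : ∀ i, e ≠ F.dart i) :
    F.coneRotSys.next (F.liftDart e) = F.liftDart (R.next e) := by
  refine SimpleGraph.Dart.ext _ _ (Prod.ext rfl ?_)
  show F.coneRot (some e.snd) (some e.fst) = some (R.rot e.snd e.fst)
  by_cases hb : e.snd ∈ Set.range F.vertex
  · obtain ⟨i, hi⟩ := hb
    rw [← hi, coneRot_vertex, Option.insertNoneAfter_of_ne]
    intro h
    exact he (i - 1) (SimpleGraph.Dart.ext _ _ (Prod.ext h (by simp [dart, hi])))
  · rw [coneRot_of_notMem _ hb]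
    rfl

theorem next_liftDart_dart (i : ZMod n) :
    F.coneRotSys.next (F.liftDart (F.dart i)) = F.spokeIn (i + 1) := by
  refine SimpleGraph.Dart.ext _ _ (Prod.ext rfl ?_)
  show F.coneRot (some (F.vertex (i + 1))) (some (F.vertex i)) = none
  rw [coneRot_vertex, add_sub_cancel_right, Option.insertNoneAfter_self]

theorem next_spokeIn (i : ZMod n) : F.coneRotSys.next (F.spokeIn i) = F.spokeOut (i - 1) :=
  SimpleGraph.Dart.ext _ _ (Prod.ext rfl (F.coneRot_none_vertex i))

theorem next_spokeOut (i : ZMod n) :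
    F.coneRotSys.next (F.spokeOut i) = F.liftDart (F.dart i) := by
  refine SimpleGraph.Dart.ext _ _ (Prod.ext rfl ?_)
  show F.coneRot (some (F.vertex i)) none = some (F.vertex (i + 1))
  rw [coneRot_vertex, Option.insertNoneAfter_none, rot_vertex_sub_one]

theorem coneRotSys_iterate_next_three (h : ∀ e, (∀ i, e ≠ F.dart i) → R.next^[3] e = e)
    (d : F.cone.Dart) : F.coneRotSys.next^[3] d = d := by
  show F.coneRotSys.next (F.coneRotSys.next (F.coneRotSys.next d)) = d
  rcases F.cone_dart_cases d with ⟨e, rfl⟩ | ⟨i, rfl⟩ | ⟨i, rfl⟩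
  · by_cases he : ∃ i, e = F.dart i
    · obtain ⟨i, rfl⟩ := he
      rw [next_liftDart_dart, next_spokeIn, add_sub_cancel_right, next_spokeOut]
    · rw [not_exists] at he
      have he₁ := F.next_ne_dart he
      rw [next_liftDart_of_ne _ he, next_liftDart_of_ne _ he₁,
        next_liftDart_of_ne _ (F.next_ne_dart he₁)]
      exact congrArg F.liftDart (h e he)
  · rw [next_spokeIn, next_spokeOut, next_liftDart_dart, sub_add_cancel]
  · rw [next_spokeOut, next_liftDart_dart, next_spokeIn, add_sub_cancel_right]

end SimpleFace

end RotSys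

/-- Assuming Huneke's theorem, that no simple graph with fewer than 10 vertices has a
triangular embedding in the orientable surface `S_2` of genus 2, the complete graph
`K_8` has no nearly triangular embedding in `S_2`, i.e. no nearly triangular minimum
genus embedding (the minimum genus of `K_8` being 2). -/
theorem stmt9
    (huneke : ∀ (n : ℕ), n ≤ 9 → ∀ (G : SimpleGraph (Fin n)) (R : RotSys G),
      (∀ d : G.Dart, (R.next)^[3] d = d ∧ R.next d ≠ d) →
      ¬ ((n : ℤ) - (Nat.card G.edgeSet : ℤ) + (R.numFaces : ℤ) = 2 - 2 * 2)) :
    ∀ R : RotSys (completeGraph (Fin 8)),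
      ((8 : ℤ) - (Nat.card (completeGraph (Fin 8)).edgeSet : ℤ) + (R.numFaces : ℤ)
        = 2 - 2 * 2) →
      ¬ R.nearlyTriangular := by
  rintro R hEuler ⟨d₀, hd₀⟩
  have hE : Nat.card (completeGraph (Fin 8)).edgeSet = 28 := by
    rw [SimpleGraph.natCard_edgeSet_completeGraph]; rfl
  have hD := (completeGraph (Fin 8)).natCard_dart_eq_two_mul
  have hperiod : minimalPeriod R.next d₀ = 5 := by
    have := R.natCard_dart_add_three_eq d₀ hd₀
    omega
  obtain ⟨F, hF⟩ := R.exists_simpleFace_five (R.rot_ne_self_of_completeGraph (by simp))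
    (hperiod ▸ isPeriodicPt_minimalPeriod R.next d₀)
  -- the darts off the pentagon are not in the orbit of `d₀`, so they lie on triangles
  have htri : ∀ e, (∀ i, e ≠ F.dart i) → R.next^[3] e = e := fun e he =>
    (hd₀ e).resolve_right fun ⟨k, hk⟩ =>
      he k (by rw [← hk, ← hF, F.iterate_next_dart, zero_add])
  have hcone := F.coneRotSys_iterate_next_three htri
  have hD' := F.natCard_cone_dart
  have hF' := F.coneRotSys.natCard_dart_eq_three_mul_numFaces hcone
  have hE' := F.cone.natCard_dart_eq_two_mul
  let f := F.cone.overFinIso (by simp : Fintype.card (Option (Fin 8)) = 9)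
  refine huneke 9 le_rfl _ (F.coneRotSys.map f)
    (fun d => ⟨F.coneRotSys.iterate_next_map_of_forall f hcone d, RotSys.next_ne_self _ d⟩) ?_
  rw [RotSys.numFaces_map, ← Nat.card_congr f.mapEdgeSet]
  omega
end
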